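/- If T is a triangulation of the convex n-gon and e is a chord with e ∉ T, then some chord of T crosses e; that is, every triangulation not containing a given chord must contain a chord crossing it. -/
import Mathlib


namespace FlipCut

/-- `x` lies strictly inside the open cyclic arc from `a` to `b`
(going forward in the cyclic order on `ZMod n`). -/
def Btw (n : ℕ) (a x b : ZMod n) : Prop :=
  0 < (x - a).val ∧ (x - a).val < (b - a).val

/-- An unordered pair of vertices of the convex `n`-gon is a *chord*:
its two endpoints are distinct and not cyclically adjacent. -/
def IsChord (n : ℕ) (e : Sym2 (ZMod n)) : Prop :=
  ¬ e.IsDiag ∧ ∀ a ∈ e, ∀ b ∈ e, a ≠ b → b ≠ a + 1 ∧ b ≠ a - 1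

/-- Two chords *cross*: they can be written as `{a, b}` and `{c, d}` where `c`
lies strictly inside the open cyclic arc from `a` to `b` and `d` lies strictly
inside the open cyclic arc from `b` to `a` (i.e. the endpoint pairs separate
each other in the cyclic order, equivalently exactly one of `c, d` lies in the
open cyclic arc from `a` to `b`). -/
def Crosses (n : ℕ) (e f : Sym2 (ZMod n)) : Prop :=
  ∃ a b c d : ZMod n, e = s(a, b) ∧ f = s(c, d) ∧ Btw n a c b ∧ Btw n b d a

/-- A *triangulation* of the convex `n`-gon: a set of exactly `n - 3`
pairwise non-crossing chords. -/
def IsTriangulation (n : ℕ) (T : Finset (Sym2 (ZMod n))) : Prop :=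
  T.card = n - 3 ∧ (∀ e ∈ T, IsChord n e) ∧
    ∀ e ∈ T, ∀ f ∈ T, e ≠ f → ¬ Crosses n e f

/-- Triangulations `T` and `T'` differ by a *flip*: their symmetric difference
has exactly two chords. -/
def FlipAdj (n : ℕ) (T T' : Finset (Sym2 (ZMod n))) : Prop :=
  (symmDiff T T').card = 2

/-- `T` *avoids* `X`: `T` contains no chord of `X`. -/
def Avoids (n : ℕ) (T X : Finset (Sym2 (ZMod n))) : Prop :=
  ∀ e ∈ X, e ∉ T

/-- A vertex of the flip graph `F₋ₓ`: a triangulation avoiding `X`. -/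
def AvoidingTri (n : ℕ) (X T : Finset (Sym2 (ZMod n))) : Prop :=
  IsTriangulation n T ∧ Avoids n T X

/-- A single edge of the flip graph `F₋ₓ`: both endpoints are triangulations
avoiding `X` and they differ by a flip. -/
def FlipStep (n : ℕ) (X T T' : Finset (Sym2 (ZMod n))) : Prop :=
  AvoidingTri n X T ∧ AvoidingTri n X T' ∧ FlipAdj n T T'

/-- `S` and `T` are joined by a path in the flip graph `F₋ₓ`: a sequence of
flips in which every intermediate triangulation avoids `X`. -/
def FlipConn (n : ℕ) (X S T : Finset (Sym2 (ZMod n))) : Prop :=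
  Relation.ReflTransGen (FlipStep n X) S T

/-- The flip graph `F₋ₓ` is connected. -/
def FlipGraphConnected (n : ℕ) (X : Finset (Sym2 (ZMod n))) : Prop :=
  ∀ S T, AvoidingTri n X S → AvoidingTri n X T → FlipConn n X S T

/-- `X` is a *flip cut set*: a set of chords such that the flip graph `F₋ₓ`
is disconnected. -/
def IsFlipCutSet (n : ℕ) (X : Finset (Sym2 (ZMod n))) : Prop :=
  (∀ e ∈ X, IsChord n e) ∧ ¬ FlipGraphConnected n X


section Aux

variable {n : ℕ}

lemma sym2_rep {α : Type*} (g : Sym2 α) : ∃ u v, g = s(u, v) :=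
  Sym2.ind (fun u v => ⟨u, v, rfl⟩) g

lemma sub_val' [NeZero n] (u v : ZMod n) :
    (u - v).val = if v.val ≤ u.val then u.val - v.val else u.val + n - v.val := by
  have hu := ZMod.val_lt u
  have hv := ZMod.val_lt v
  rw [sub_eq_add_neg, ZMod.val_add, ZMod.neg_val]
  by_cases h0 : v = 0
  · subst h0
    simp [Nat.mod_eq_of_lt hu, ZMod.val_zero]
  · rw [if_neg h0]
    have hv1 : 1 ≤ v.val := by
      rcases Nat.eq_zero_or_pos v.val with h | h
      · exact absurd ((ZMod.val_eq_zero v).mp h) h0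
      · exact h
    rcases le_or_gt v.val u.val with h | h
    · rw [if_pos h]
      have e1 : u.val + (n - v.val) = (u.val - v.val) + n := by omega
      rw [e1, Nat.add_mod_right, Nat.mod_eq_of_lt (by omega)]
    · rw [if_neg (by omega), Nat.mod_eq_of_lt (by omega)]
      omega

lemma sub_sub_val [NeZero n] (a x y : ZMod n) :
    (y - x).val = if (x - a).val ≤ (y - a).val then (y - a).val - (x - a).val
      else (y - a).val + n - (x - a).val := by
  have h : y - x = (y - a) - (x - a) := by ring
  rw [h, sub_val']

lemma base_eq [NeZero n] {a x y : ZMod n} (h : (x - a).val = (y - a).val) : x = y :=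
  sub_left_inj.mp (ZMod.val_injective n h)

lemma eq_add_val [NeZero n] (a x : ZMod n) : x = a + ((x - a).val : ZMod n) := by
  rw [ZMod.natCast_val, ZMod.cast_id]
  ring

lemma no_short_chord (hn : 3 ≤ n) {a : ZMod n} {g : Sym2 (ZMod n)} (hg : IsChord n g)
    (h : ∀ x ∈ g, (x - a).val ≤ 1) : False := by
  haveI : NeZero n := ⟨by omega⟩
  obtain ⟨u, v, rfl⟩ := sym2_rep g
  have hu := h u (Sym2.mem_mk_left u v)
  have hv := h v (Sym2.mem_mk_right u v)
  have huv : u ≠ v := fun e => hg.1 (by rw [e]; exact Sym2.mk_isDiag_iff.mpr rfl)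
  have hvals : (u - a).val ≠ (v - a).val := fun e => huv (base_eq e)
  have key : ∀ w z : ZMod n, w ∈ s(u,v) → z ∈ s(u,v) →
      (w - a).val = 0 → (z - a).val = 1 → False := by
    intro w z hw hz h0 h1
    have hwa : w = a := sub_eq_zero.mp ((ZMod.val_eq_zero _).mp h0)
    have hza : z = a + 1 := by
      have := eq_add_val a z
      rw [h1] at this
      simpa using this
    have hne : w ≠ z := by
      intro e; rw [e, h1] at h0; exact absurd h0 one_ne_zero
    exact (hg.2 w hw z hz hne).1 (by rw [hza, hwa])
  rcases Nat.le_one_iff_eq_zero_or_eq_one.mp hu with h0 | h1 <;>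
    rcases Nat.le_one_iff_eq_zero_or_eq_one.mp hv with g0 | g1
  · exact hvals (h0.trans g0.symm)
  · exact key u v (Sym2.mem_mk_left u v) (Sym2.mem_mk_right u v) h0 g1
  · exact key v u (Sym2.mem_mk_right u v) (Sym2.mem_mk_left u v) g0 h1
  · exact hvals (h1.trans g1.symm)

lemma arc_bound (n : ℕ) (hn : 3 ≤ n) : ∀ k : ℕ, ∀ a b : ZMod n, ∀ S : Finset (Sym2 (ZMod n)),
    2 ≤ k → (b - a).val = k →
    (∀ e ∈ S, IsChord n e) →
    (∀ e ∈ S, ∀ f ∈ S, e ≠ f → ¬ Crosses n e f) →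
    (∀ e ∈ S, ∀ x ∈ e, (x - a).val ≤ k) →
    s(a, b) ∉ S → S.card ≤ k - 2 := by
  haveI : NeZero n := ⟨by omega⟩
  haveI : Fact (1 < n) := ⟨by omega⟩
  intro k
  induction k using Nat.strong_induction_on with
  | _ k IH =>
  intro a b S hk hab hch hnc harc habS
  classical
  have hkn : k < n := hab ▸ ZMod.val_lt (b - a)
  have haa : (a - a).val = 0 := by simp
  by_cases hY : ∃ y : ZMod n, s(a, y) ∈ S
  · -- Case B : some chord at a
    obtain ⟨y0, hy0⟩ := hY
    have hYne : (Finset.univ.filter (fun y : ZMod n => s(a,y) ∈ S)).Nonempty :=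
      ⟨y0, by simp [hy0]⟩
    obtain ⟨x, hxY, hxmax⟩ := Finset.exists_max_image _ (fun y => (y - a).val) hYne
    have hfS : s(a, x) ∈ S := (Finset.mem_filter.mp hxY).2
    have hmax : ∀ y : ZMod n, s(a,y) ∈ S → (y - a).val ≤ (x - a).val := fun y hy =>
      hxmax y (by simp [hy])
    set j := (x - a).val with hjdef
    have hfchord := hch _ hfS
    have hax : a ≠ x := fun e => hfchord.1 (by rw [← e]; exact Sym2.mk_isDiag_iff.mpr rfl)
    have hj0 : j ≠ 0 := fun h0 => hax (sub_eq_zero.mp ((ZMod.val_eq_zero _).mp h0)).symm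
    have hj1 : j ≠ 1 := by
      intro h1
      have hx1 : x = a + 1 := by
        have := eq_add_val a x
        rw [← hjdef, h1] at this
        simpa using this
      exact (hfchord.2 a (Sym2.mem_mk_left a x) x (Sym2.mem_mk_right a x) hax).1 hx1
    have hjk : j ≤ k := harc _ hfS x (Sym2.mem_mk_right a x)
    have hjkne : j ≠ k := by
      intro e
      have hxb : x = b := base_eq (by rw [← hjdef, e, hab])
      exact habS (hxb ▸ hfS)
    have hj2 : 2 ≤ j := by omega
    have hjlt : j < k := by omega
    set S₁ := S.filter (fun g => ∀ z ∈ g, (z - a).val ≤ j) with hS1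
    set S₂ := S.filter (fun g => ∀ z ∈ g, (z - x).val ≤ k - j) with hS2
    have hax2 : (a - x).val = n - j := by
      rw [sub_sub_val a x a, haa, if_neg (by omega)]
      omega
    have hS2mem : ∀ g ∈ S, (∀ z ∈ g, j ≤ (z - a).val ∧ (z - a).val ≤ k) → g ∈ S₂ := by
      intro g hg hz
      refine Finset.mem_filter.mpr ⟨hg, ?_⟩
      intro z hzg
      obtain ⟨h1, h2⟩ := hz z hzg
      rw [sub_sub_val a x z, if_pos (by rw [← hjdef]; omega)]
      omega
    have hsub : S ⊆ S₁ ∪ S₂ := by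
      intro g hg
      obtain ⟨u, v, rfl⟩ := sym2_rep g
      have hu := harc _ hg u (Sym2.mem_mk_left u v)
      have hv := harc _ hg v (Sym2.mem_mk_right u v)
      have memS1 : (u - a).val ≤ j → (v - a).val ≤ j → s(u,v) ∈ S₁ ∪ S₂ := by
        intro h1 h2
        refine Finset.mem_union_left _ (Finset.mem_filter.mpr ⟨hg, ?_⟩)
        intro z hz
        rcases Sym2.mem_iff.mp hz with rfl | rfl
        · exact h1
        · exact h2
      by_cases hua : u = a
      · subst hua
        exact memS1 (by rw [haa]; omega) (hmax v hg)
      by_cases hva : v = a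
      · subst hva
        exact memS1 (hmax u (by rwa [Sym2.eq_swap] at hg)) (by rw [haa]; omega)
      have hu1 : 1 ≤ (u - a).val := by
        rcases Nat.eq_zero_or_pos (u - a).val with h0 | h1
        · exact absurd (sub_eq_zero.mp ((ZMod.val_eq_zero _).mp h0)) hua
        · exact h1
      have hv1 : 1 ≤ (v - a).val := by
        rcases Nat.eq_zero_or_pos (v - a).val with h0 | h1
        · exact absurd (sub_eq_zero.mp ((ZMod.val_eq_zero _).mp h0)) hva
        · exact h1
      have hanotg : a ∉ s(u, v) := by
        intro hmem
        rcases Sym2.mem_iff.mp hmem with h | h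
        · exact hua h.symm
        · exact hva h.symm
      have hne : s(a, x) ≠ s(u, v) := by
        intro e
        exact hanotg (e ▸ Sym2.mem_mk_left a x)
      rcases le_or_gt (u - a).val j with huj | huj <;> rcases le_or_gt (v - a).val j with hvj | hvj
      · exact memS1 huj hvj
      · -- u ≤ j < v
        rcases eq_or_lt_of_le huj with heq | hlt
        · exact Finset.mem_union_right _ (hS2mem _ hg (fun z hz => by
            rcases Sym2.mem_iff.mp hz with rfl | rfl
            · exact ⟨le_of_eq heq.symm, hu⟩
            · exact ⟨le_of_lt hvj, hv⟩))
        · exfalso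
          refine hnc _ hfS _ hg hne ⟨a, x, u, v, rfl, rfl, ⟨by omega, by rw [← hjdef]; omega⟩, ?_⟩
          constructor
          · rw [sub_sub_val a x v, if_pos (by rw [← hjdef]; omega)]
            rw [← hjdef]; omega
          · rw [sub_sub_val a x v, if_pos (by rw [← hjdef]; omega), hax2, ← hjdef]
            omega
      · -- v ≤ j < u
        rcases eq_or_lt_of_le hvj with heq | hlt
        · exact Finset.mem_union_right _ (hS2mem _ hg (fun z hz => by
            rcases Sym2.mem_iff.mp hz with rfl | rfl
            · exact ⟨le_of_lt huj, hu⟩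
            · exact ⟨le_of_eq heq.symm, hv⟩))
        · exfalso
          refine hnc _ hfS _ hg hne ⟨a, x, v, u, rfl, Sym2.eq_swap, ⟨by omega, by rw [← hjdef]; omega⟩, ?_⟩
          constructor
          · rw [sub_sub_val a x u, if_pos (by rw [← hjdef]; omega)]
            rw [← hjdef]; omega
          · rw [sub_sub_val a x u, if_pos (by rw [← hjdef]; omega), hax2, ← hjdef]
            omega
      · exact Finset.mem_union_right _ (hS2mem _ hg (fun z hz => by
          rcases Sym2.mem_iff.mp hz with rfl | rfl
          · exact ⟨le_of_lt huj, hu⟩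
          · exact ⟨le_of_lt hvj, hv⟩))
    have hS1card : S₁.card ≤ j - 1 := by
      have h1 := Finset.pred_card_le_card_erase (s := S₁) (a := s(a, x))
      have h2 := IH j hjlt a x (S₁.erase s(a, x)) hj2 hjdef.symm
        (fun e he => hch e (Finset.mem_of_mem_erase he |> Finset.mem_filter.mp |>.1))
        (fun e he f hf hef => hnc e (Finset.mem_of_mem_erase he |> Finset.mem_filter.mp |>.1)
          f (Finset.mem_of_mem_erase hf |> Finset.mem_filter.mp |>.1) hef)
        (fun e he z hz => (Finset.mem_of_mem_erase he |> Finset.mem_filter.mp |>.2) z hz)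
        (Finset.notMem_erase _ _)
      omega
    have hbx : (b - x).val = k - j := by
      rw [sub_sub_val a x b, hab, if_pos (by rw [← hjdef]; omega), ← hjdef]
    have hS2card : S₂.card ≤ k - j - 1 := by
      rcases Nat.lt_or_ge (k - j) 2 with h2 | h2
      · have hemp : S₂ = ∅ := Finset.eq_empty_of_forall_notMem (fun g hg => by
          have hgf := Finset.mem_filter.mp hg
          exact no_short_chord (a := x) hn (hch g hgf.1) (fun z hz => by
            have := hgf.2 z hz; omega))
        rw [hemp]
        simp
      · have h1 := Finset.pred_card_le_card_erase (s := S₂) (a := s(x, b))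
        have h3 := IH (k - j) (by omega) x b (S₂.erase s(x, b)) h2 hbx
          (fun e he => hch e (Finset.mem_of_mem_erase he |> Finset.mem_filter.mp |>.1))
          (fun e he f hf hef => hnc e (Finset.mem_of_mem_erase he |> Finset.mem_filter.mp |>.1)
            f (Finset.mem_of_mem_erase hf |> Finset.mem_filter.mp |>.1) hef)
          (fun e he z hz => (Finset.mem_of_mem_erase he |> Finset.mem_filter.mp |>.2) z hz)
          (Finset.notMem_erase _ _)
        omega
    calc S.card ≤ (S₁ ∪ S₂).card := Finset.card_le_card hsub
      _ ≤ S₁.card + S₂.card := Finset.card_union_le _ _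
      _ ≤ k - 2 := by omega
  · -- Case A : no chord at a
    have hnota : ∀ g ∈ S, a ∉ g := by
      intro g hg hag
      obtain ⟨u, v, rfl⟩ := sym2_rep g
      rcases Sym2.mem_iff.mp hag with rfl | rfl
      · exact hY ⟨v, hg⟩
      · exact hY ⟨u, by rwa [Sym2.eq_swap]⟩
    have hpos : ∀ g ∈ S, ∀ x ∈ g, 1 ≤ (x - a).val := by
      intro g hg x hx
      rcases Nat.eq_zero_or_pos (x - a).val with h0 | h1
      · exact absurd ((sub_eq_zero.mp ((ZMod.val_eq_zero _).mp h0)) ▸ hx) (hnota g hg)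
      · exact h1
    have ha1 : (a + 1 - a).val = 1 := by
      rw [add_sub_cancel_left]
      exact ZMod.val_one n
    have harc' : ∀ g ∈ S, ∀ x ∈ g, (x - (a+1)).val ≤ k - 1 := by
      intro g hg x hx
      have h1 := hpos g hg x hx
      have h2 := harc g hg x hx
      rw [sub_sub_val a (a+1) x, ha1, if_pos h1]
      omega
    rcases Nat.lt_or_ge k 3 with hk2 | hk3
    · have hemp : S = ∅ := Finset.eq_empty_of_forall_notMem (fun g hg =>
        no_short_chord (a := a+1) hn (hch g hg) (fun z hz => by
          have := harc' g hg z hz; omega))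
      rw [hemp]
      simp
    · have hab1 : (b - (a+1)).val = k - 1 := by
        rw [sub_sub_val a (a+1) b, ha1, hab, if_pos (by omega)]
      have h1 := Finset.pred_card_le_card_erase (s := S) (a := s(a+1, b))
      have h2 := IH (k-1) (by omega) (a+1) b (S.erase s(a+1, b)) (by omega) hab1
        (fun e he => hch e (Finset.mem_of_mem_erase he))
        (fun e he f hf hef => hnc e (Finset.mem_of_mem_erase he) f (Finset.mem_of_mem_erase hf) hef)
        (fun e he z hz => harc' e (Finset.mem_of_mem_erase he) z hz)
        (Finset.notMem_erase _ _)
      omega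

lemma crosses_symm (hn : 3 ≤ n) {e f : Sym2 (ZMod n)} (h : Crosses n e f) : Crosses n f e := by
  haveI : NeZero n := ⟨by omega⟩
  obtain ⟨a, b, c, d, rfl, rfl, ⟨hc1, hc2⟩, ⟨hd1, hd2⟩⟩ := h
  have haa : (a - a).val = 0 := by simp
  have hα := ZMod.val_lt (c - a)
  have hβ := ZMod.val_lt (b - a)
  have hδ := ZMod.val_lt (d - a)
  rw [sub_sub_val a b d] at hd1 hd2
  rw [sub_sub_val a b a, haa] at hd2
  have hbd : (b - a).val < (d - a).val := by
    by_contra hcon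
    push_neg at hcon
    rcases eq_or_lt_of_le hcon with heq | hlt
    · rw [if_pos (le_of_eq heq.symm)] at hd1
      omega
    · rw [if_neg (by omega)] at hd1 hd2
      rw [if_neg (by omega)] at hd2
      omega
  rw [if_pos (le_of_lt hbd)] at hd1 hd2
  rw [if_neg (by omega)] at hd2
  refine ⟨c, d, b, a, rfl, Sym2.eq_swap, ⟨?_, ?_⟩, ⟨?_, ?_⟩⟩
  · rw [sub_sub_val a c b, if_pos (le_of_lt hc2)]
    omega
  · rw [sub_sub_val a c b, if_pos (le_of_lt hc2), sub_sub_val a c d, if_pos (by omega)]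
    omega
  · rw [sub_sub_val a d a, haa, if_neg (by omega)]
    omega
  · rw [sub_sub_val a d a, haa, if_neg (by omega), sub_sub_val a d c, if_neg (by omega)]
    omega

end Aux

/-- Every triangulation not containing a given chord must
contain a chord crossing it: if `T` is a triangulation of the convex `n`-gon
and `e` is a chord with `e ∉ T`, then some chord of `T` crosses `e`. -/
theorem triangulation_crossing_chord (n : ℕ) (hn : 3 ≤ n)
    (T : Finset (Sym2 (ZMod n))) (hT : IsTriangulation n T)
    (e : Sym2 (ZMod n)) (he : IsChord n e) (heT : e ∉ T) :
    ∃ f ∈ T, Crosses n f e := by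
  by_contra hcon
  push_neg at hcon
  haveI : NeZero n := ⟨by omega⟩
  haveI : Fact (1 < n) := ⟨by omega⟩
  classical
  set S := insert e T with hS
  have hcard : S.card = n - 2 := by
    rw [hS, Finset.card_insert_of_notMem heT, hT.1]
    omega
  have hch : ∀ g ∈ S, IsChord n g := by
    intro g hg
    rcases Finset.mem_insert.mp hg with rfl | hg'
    · exact he
    · exact hT.2.1 g hg'
  have hnc : ∀ g ∈ S, ∀ f ∈ S, g ≠ f → ¬ Crosses n g f := by
    intro g hg f hf hgf hcr
    rcases Finset.mem_insert.mp hg with rfl | hg' <;> rcases Finset.mem_insert.mp hf with rfl | hf'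
    · exact hgf rfl
    · exact hcon f hf' (crosses_symm hn hcr)
    · exact hcon g hg' hcr
    · exact hT.2.2 g hg' f hf' hgf hcr
  have hneg1 : ((-1 : ZMod n)).val = n - 1 := by
    rw [show (-1 : ZMod n) = -(1 : ZMod n) by ring, ZMod.neg_val,
      if_neg (one_ne_zero), ZMod.val_one n]
  have habS : s((0 : ZMod n), (-1 : ZMod n)) ∉ S := by
    intro hmem
    have hc := hch _ hmem
    have h0 : (0 : ZMod n) ∈ s((0 : ZMod n), (-1 : ZMod n)) := Sym2.mem_mk_left _ _
    have h1 : (-1 : ZMod n) ∈ s((0 : ZMod n), (-1 : ZMod n)) := Sym2.mem_mk_right _ _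
    have hne : (0 : ZMod n) ≠ -1 := by
      intro hh
      have : ((-1 : ZMod n)).val = 0 := by rw [← hh, ZMod.val_zero]
      omega
    exact (hc.2 0 h0 (-1) h1 hne).2 (by ring)
  have hbound := arc_bound n hn (n - 1) 0 (-1) S (by omega)
    (by rw [sub_zero, hneg1])
    hch hnc
    (fun g hg x hx => by
      rw [sub_zero]
      have := ZMod.val_lt x
      omega)
    habS
  omega

end FlipCut
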